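/- If Q and R are mutually polar retractions on a Banach space X whose ranges M and N satisfy int M ≠ ∅ and dim N = 1, then Q and R are uniquely determined by M and N: any other pair of mutually polar retractions with the same cone ranges coincides with (Q,R). -/

import Mathlib

open Set

variable {X : Type*} [NormedAddCommGroup X] [NormedSpace ℝ X]

/-- A retraction: continuous, positively homogeneous, idempotent map whose range is a
nonzero closed convex cone, mapping points outside the range to the boundary of the range. -/
def IsRetraction (T : X → X) : Prop :=
  Continuous T ∧
  (∀ t : ℝ, 0 ≤ t → ∀ x, T (t • x) = t • T x) ∧
  (∀ x, T (T x) = T x) ∧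
  Set.range T ≠ {0} ∧
  IsClosed (Set.range T) ∧
  Convex ℝ (Set.range T) ∧
  (∀ t : ℝ, 0 ≤ t → ∀ y ∈ Set.range T, t • y ∈ Set.range T) ∧
  (∀ x, x ∉ Set.range T → T x ∈ frontier (Set.range T))

/-- Mutually polar retractions: Q + R = I and QR = RQ = 0. -/
def MutuallyPolar (Q R : X → X) : Prop :=
  IsRetraction Q ∧ IsRetraction R ∧
  (∀ x, Q x + R x = x) ∧ (∀ x, Q (R x) = 0) ∧ (∀ x, R (Q x) = 0)

/-- M and N are transversal with transversal line Δ. -/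
def TransversalWith (M N : Set X) (Δ : Submodule ℝ X) : Prop :=
  M ∩ N = {0} ∧
  (∃ d : X, d ≠ 0 ∧ Δ = Submodule.span ℝ {d}) ∧
  ((Δ : Set X) ∩ (M \ {0})).Nonempty ∧
  ((Δ : Set X) ∩ (N \ {0})).Nonempty ∧
  ((Δ : Set X) ∩ (interior M ∪ interior N)).Nonempty

/-- M and N are transversal cones. -/
def Transversal (M N : Set X) : Prop := ∃ Δ : Submodule ℝ X, TransversalWith M N Δ

/-!
The range `N` of `R` is a one-dimensional convex cone, so it is a line or a ray. It is not a
line: for an interior point `m₀` of `M`, the decomposition `-m₀ = Q(-m₀) + R(-m₀)` would then put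
`-m₀` in `M`, so `0` would be interior to the cone `M` and `M` would be everything. So `N` is a ray,
and for `x ∉ M` the parts `R x`, `R' x` are comparable in the order of that ray. If, say,
`R x - R' x` were a nonzero point of `N`, a supporting functional of `M` at the boundary point
`Q x` would be nonpositive at `Q' x = Q x + (R x - R' x)`, hence on `N` as well as on `M`, hence on
`M + N = X`, which is absurd.
-/

open Filter Topology

theorem exists_smul_eq_of_finrank_span_eq_one {K V : Type*} [DivisionRing K] [AddCommGroup V]
    [Module K V] {N : Set V} (hN : Module.finrank K (Submodule.span K N) = 1) {d n : V}
    (hd : d ∈ N) (hd0 : d ≠ 0) (hn : n ∈ N) : ∃ c : K, c • d = n := by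
  obtain ⟨c, hc⟩ := (finrank_eq_one_iff_of_nonzero' (⟨d, Submodule.subset_span hd⟩ :
    Submodule.span K N) (by simpa using hd0)).1 hN ⟨n, Submodule.subset_span hn⟩
  exact ⟨c, congrArg Subtype.val hc⟩

theorem mem_of_zero_mem_interior {M : Set X} (hcone : ∀ t : ℝ, 0 ≤ t → ∀ y ∈ M, t • y ∈ M)
    (h0 : (0 : X) ∈ interior M) (v : X) : v ∈ M := by
  have hsmul : ∀ᶠ t : ℝ in 𝓝[>] 0, t • v ∈ M := by
    have hlim : Tendsto (fun t : ℝ => t • v) (𝓝 0) (𝓝 0) := by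
      simpa using (tendsto_id (x := 𝓝 (0 : ℝ))).smul_const v
    exact (hlim.eventually (mem_interior_iff_mem_nhds.1 h0)).filter_mono nhdsWithin_le_nhds
  obtain ⟨t, htv, ht⟩ := (hsmul.and self_mem_nhdsWithin).exists
  simpa [smul_smul, ht.ne'] using hcone t⁻¹ (inv_nonneg.2 ht.le) _ htv

theorem exists_dual_nonpos_of_notMem_interior {M : Set X} (hconv : Convex ℝ M)
    (hcone : ∀ t : ℝ, 0 ≤ t → ∀ y ∈ M, t • y ∈ M) {m₀ q : X} (hm₀ : m₀ ∈ interior M)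
    (hq : q ∈ M) (hqi : q ∉ interior M) :
    ∃ f : X →L[ℝ] ℝ, (∀ m ∈ M, f m ≤ 0) ∧ f q = 0 ∧ f m₀ < 0 := by
  obtain ⟨f, hf⟩ := geometric_hahn_banach_open_point hconv.interior isOpen_interior hqi
  have hle : ∀ m ∈ M, f m ≤ f q := by
    have hclosure : closure (interior M) ⊆ {m | f m ≤ f q} :=
      closure_minimal (fun m hm => (hf m hm).le) (isClosed_le f.continuous continuous_const)
    rw [hconv.closure_interior_eq_closure_of_nonempty_interior ⟨m₀, hm₀⟩] at hclosure
    exact fun m hm => hclosure (subset_closure hm)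
  have hfq : f q = 0 := by
    have h0 := hle _ (hcone 0 le_rfl q hq)
    have h2 := hle _ (hcone 2 zero_le_two q hq)
    simp only [map_smul, smul_eq_mul, zero_mul] at h0 h2
    linarith
  exact ⟨f, fun m hm => hfq ▸ hle m hm, hfq, hfq ▸ hf m₀ hm₀⟩

theorem sub_mem_or_sub_mem_of_nonneg_smul {N : Set X}
    (hcone : ∀ t : ℝ, 0 ≤ t → ∀ y ∈ N, t • y ∈ N)
    (hray : ∀ d ∈ N, d ≠ 0 → ∀ n ∈ N, ∃ c : ℝ, 0 ≤ c ∧ c • d = n)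
    {a b : X} (ha : a ∈ N) (hb : b ∈ N) : a - b ∈ N ∨ b - a ∈ N := by
  by_cases ha0 : a = 0
  · exact Or.inr (by simpa [ha0] using hb)
  obtain ⟨c, -, rfl⟩ := hray a ha ha0 b hb
  rcases le_total c 1 with hc | hc
  · left
    simpa [sub_smul] using hcone (1 - c) (by linarith) a ha
  · right
    simpa [sub_smul] using hcone (c - 1) (by linarith) a ha

namespace IsRetraction

variable {T : X → X}

theorem range_ne_singleton_zero (hT : IsRetraction T) : range T ≠ {0} := hT.2.2.2.1

theorem convex_range (hT : IsRetraction T) : Convex ℝ (range T) := hT.2.2.2.2.2.1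

theorem smul_mem_range (hT : IsRetraction T) : ∀ t : ℝ, 0 ≤ t → ∀ y ∈ range T, t • y ∈ range T :=
  hT.2.2.2.2.2.2.1

theorem apply_mem_frontier (hT : IsRetraction T) {x : X} (hx : x ∉ range T) :
    T x ∈ frontier (range T) :=
  hT.2.2.2.2.2.2.2 x hx

theorem apply_of_mem_range (hT : IsRetraction T) {y : X} (hy : y ∈ range T) : T y = y := by
  obtain ⟨x, rfl⟩ := hy
  exact hT.2.2.1 x

end IsRetraction

namespace MutuallyPolar

variable {Q R : X → X}

theorem isRetraction_left (h : MutuallyPolar Q R) : IsRetraction Q := h.1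

theorem isRetraction_right (h : MutuallyPolar Q R) : IsRetraction R := h.2.1

theorem add_apply (h : MutuallyPolar Q R) (x : X) : Q x + R x = x := h.2.2.1 x

theorem right_apply_of_mem (h : MutuallyPolar Q R) {m : X} (hm : m ∈ range Q) : R m = 0 := by
  obtain ⟨x, rfl⟩ := hm
  exact h.2.2.2.2 x

theorem eq_zero_of_mem_of_mem (h : MutuallyPolar Q R) {v : X} (hQ : v ∈ range Q)
    (hR : v ∈ range R) : v = 0 := by
  obtain ⟨x, rfl⟩ := hR
  rw [← h.isRetraction_left.apply_of_mem_range hQ]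
  exact h.2.2.2.1 x

theorem not_forall_neg_mem_range_right (h : MutuallyPolar Q R) {m₀ : X}
    (hm₀ : m₀ ∈ interior (range Q)) : ¬ ∀ n ∈ range R, -n ∈ range R := by
  intro hneg
  have hQ := h.isRetraction_left
  have hR := h.isRetraction_right
  set p := R (-m₀)
  have hdec : Q (-m₀) = -m₀ - p := eq_sub_of_add_eq (h.add_apply _)
  have hmid : (1 / 2 : ℝ) • m₀ + (1 / 2 : ℝ) • Q (-m₀) = (1 / 2 : ℝ) • -p := by
    rw [hdec, ← smul_add]
    congr 1
    abel
  have hp : p = 0 := by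
    have hM : (1 / 2 : ℝ) • -p ∈ range Q := hmid ▸ hQ.convex_range (interior_subset hm₀)
      ⟨-m₀, rfl⟩ (by norm_num) (by norm_num) (by norm_num)
    have hN : (1 / 2 : ℝ) • -p ∈ range R := hR.smul_mem_range _ (by norm_num) _ (hneg p ⟨-m₀, rfl⟩)
    simpa using h.eq_zero_of_mem_of_mem hM hN
  have hzero : (0 : X) ∈ interior (range Q) := by
    have hnegm₀ : -m₀ ∈ range Q := ⟨-m₀, by rw [hdec, hp, sub_zero]⟩
    simpa using hQ.convex_range.combo_interior_self_mem_interior hm₀ hnegm₀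
      (by norm_num : (0 : ℝ) < 1 / 2) (by norm_num : (0 : ℝ) ≤ 1 / 2) (by norm_num)
  apply hR.range_ne_singleton_zero
  refine eq_singleton_iff_unique_mem.2 ⟨?_, fun n hn => h.eq_zero_of_mem_of_mem ?_ hn⟩
  · simpa using hR.smul_mem_range 0 le_rfl _ ⟨0, rfl⟩
  · exact mem_of_zero_mem_interior hQ.smul_mem_range hzero n

theorem exists_nonneg_smul_eq_of_finrank_eq_one (h : MutuallyPolar Q R) {m₀ : X}
    (hm₀ : m₀ ∈ interior (range Q)) (hdim : Module.finrank ℝ (Submodule.span ℝ (range R)) = 1) :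
    ∀ d ∈ range R, d ≠ 0 → ∀ n ∈ range R, ∃ c : ℝ, 0 ≤ c ∧ c • d = n := by
  intro d hd hd0 n hn
  have hR := h.isRetraction_right
  obtain ⟨c, rfl⟩ := exists_smul_eq_of_finrank_span_eq_one hdim hd hd0 hn
  refine ⟨c, not_lt.1 fun hc => h.not_forall_neg_mem_range_right hm₀ fun v hv => ?_, rfl⟩
  have hnegd : -d ∈ range R := by
    simpa [smul_smul, hc.ne] using hR.smul_mem_range _ (neg_nonneg.2 (inv_nonpos.2 hc.le)) _ hn
  obtain ⟨a, rfl⟩ := exists_smul_eq_of_finrank_span_eq_one hdim hd hd0 hv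
  rcases le_total 0 a with ha | ha
  · simpa using hR.smul_mem_range _ ha _ hnegd
  · simpa using hR.smul_mem_range _ (neg_nonneg.2 ha) _ hd

theorem right_apply_eq_of_sub_mem (h : MutuallyPolar Q R) {m₀ : X}
    (hm₀ : m₀ ∈ interior (range Q))
    (hray : ∀ d ∈ range R, d ≠ 0 → ∀ n ∈ range R, ∃ c : ℝ, 0 ≤ c ∧ c • d = n)
    {x m n : X} (hx : x ∉ range Q) (hm : m ∈ range Q) (hmn : m + n = x)
    (hn : R x - n ∈ range R) : R x = n := by
  by_contra hne
  obtain ⟨f, hfM, hfQx, hfm₀⟩ := exists_dual_nonpos_of_notMem_interior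
    h.isRetraction_left.convex_range h.isRetraction_left.smul_mem_range hm₀ ⟨x, rfl⟩
    (h.isRetraction_left.apply_mem_frontier hx).2
  have hfd : f (R x - n) ≤ 0 := by
    have hdiff : R x - n = m - Q x := by
      rw [sub_eq_sub_iff_add_eq_add, add_comm (R x), h.add_apply, hmn]
    rw [hdiff, map_sub, hfQx, sub_zero]
    exact hfM m hm
  have hfN : ∀ n' ∈ range R, f n' ≤ 0 := by
    intro n' hn'
    obtain ⟨c, hc, rfl⟩ := hray _ hn (sub_ne_zero.2 hne) n' hn'
    rw [map_smul, smul_eq_mul]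
    exact mul_nonpos_of_nonneg_of_nonpos hc hfd
  have hneg : f (-m₀) ≤ 0 := by
    rw [← h.add_apply (-m₀), map_add]
    exact add_nonpos (hfM _ ⟨_, rfl⟩) (hfN _ ⟨_, rfl⟩)
  rw [map_neg] at hneg
  linarith

end MutuallyPolar

theorem stmt7_general (Q R Q' R' : X → X)
    (h : MutuallyPolar Q R)
    (hint : (interior (Set.range Q)).Nonempty)
    (hdim : Module.finrank ℝ (Submodule.span ℝ (Set.range R)) = 1)
    (h' : MutuallyPolar Q' R')
    (hq : Set.range Q' = Set.range Q) (hr : Set.range R' = Set.range R) :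
    Q' = Q ∧ R' = R := by
  obtain ⟨m₀, hm₀⟩ := hint
  have hray := h.exists_nonneg_smul_eq_of_finrank_eq_one hm₀ hdim
  have hR : ∀ x, R' x = R x := by
    intro x
    by_cases hx : x ∈ range Q
    · rw [h.right_apply_of_mem hx, h'.right_apply_of_mem (hq ▸ hx)]
    rcases sub_mem_or_sub_mem_of_nonneg_smul h.isRetraction_right.smul_mem_range hray
      ⟨x, rfl⟩ (hr ▸ ⟨x, rfl⟩ : R' x ∈ range R) with hsub | hsub
    · exact (h.right_apply_eq_of_sub_mem hm₀ hray hx (hq ▸ ⟨x, rfl⟩) (h'.add_apply x) hsub).symm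
    · rw [← hq] at hm₀ hx
      rw [← hr] at hray hsub
      exact h'.right_apply_eq_of_sub_mem hm₀ hray hx (by rw [hq]; exact ⟨x, rfl⟩) (h.add_apply x)
        hsub
  refine ⟨funext fun x => add_right_cancel (b := R x) ?_, funext hR⟩
  rw [← hR x, h'.add_apply, hR, h.add_apply]

theorem stmt7 [CompleteSpace X] (Q R Q' R' : X → X)
    (h : MutuallyPolar Q R)
    (hint : (interior (Set.range Q)).Nonempty)
    (hdim : Module.finrank ℝ (Submodule.span ℝ (Set.range R)) = 1)
    (h' : MutuallyPolar Q' R')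
    (hq : Set.range Q' = Set.range Q) (hr : Set.range R' = Set.range R) :
    Q' = Q ∧ R' = R :=
  stmt7_general Q R Q' R' h hint hdim h' hq hr
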